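/- arXiv:1606.05736 — 3 statements merged into one kernel-verified Lean document; each statement's English description precedes it below -/
import Mathlib

section
/- Let T be a densely defined closed operator from H1 to H2. Then T is minimum attaining if and only if T*T is minimum attaining, where T*T is the densely defined positive operator with domain D(T*T) = {x ∈ D(T) : Tx ∈ D(T*)} and (T*T)x = T*(Tx). -/
/-!
For a unit vector `x ∈ D(T*T)`, `‖Tx‖² = ⟪T*T x, x⟫ ≤ ‖T*T x‖`, so `m(T)² ≤ m(T*T)`. A unit vector
`x₀` attaining `m(T)` satisfies the Euler–Lagrange equation `⟪T x₀, T y⟫ = m(T)² ⟪x₀, y⟫` on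
`D(T)` (Cauchy–Schwarz for the semidefinite form `⟪T u, T v⟫ - m(T)² ⟪u, v⟫`), i.e.
`T*T x₀ = m(T)² x₀`, so `x₀` attains `m(T*T)`.

Conversely, for closed `T` the operator `1 + T*T` is onto. If `w ∈ D(T*T)` solves
`T*T w + w = x` with `x ∈ D(T)`, Cauchy–Schwarz for the graph inner product gives
`‖x‖⁴ ≤ (‖w‖² + ‖Tw‖²)(‖x‖² + ‖Tx‖²) ≤ ‖x‖ ‖w‖ (‖x‖² + ‖Tx‖²)`, so a lower bound
`‖(1 + T*T) w‖ ≥ K ‖w‖` yields `‖x‖² + ‖Tx‖² ≥ K ‖x‖²` on all of `D(T)`. Since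
`‖(1 + T*T) w‖² = ‖T*T w‖² + 2 ‖Tw‖² + ‖w‖²`, one may take `K² = m(T*T)² + 2 m(T)² + 1`, and
`K ≤ m(T)² + 1` then forces `m(T*T) ≤ m(T)²`. Hence `m(T*T) = m(T)²`, and a unit vector attaining
`m(T*T)` attains `m(T)` because `‖T x₀‖² ≤ ‖T*T x₀‖ = m(T)²`.
-/

open scoped InnerProductSpace

variable {H₁ H₂ H₃ : Type*} [NormedAddCommGroup H₁] [InnerProductSpace ℂ H₁] [CompleteSpace H₁]
  [NormedAddCommGroup H₂] [InnerProductSpace ℂ H₂] [CompleteSpace H₂]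
  [NormedAddCommGroup H₃] [InnerProductSpace ℂ H₃] [CompleteSpace H₃]

/-- Composition `S ∘ T` of partially defined operators, with the natural domain
`{x ∈ D(T) : Tx ∈ D(S)}` and value `x ↦ S (T x)`. -/
noncomputable def pmapComp (S : H₂ →ₗ.[ℂ] H₃) (T : H₁ →ₗ.[ℂ] H₂) : H₁ →ₗ.[ℂ] H₃ where
  domain := (S.domain.comap T.toFun).map T.domain.subtype
  toFun :=
    S.toFun ∘ₗ (T.toFun.restrict (q := S.domain) (fun _ hx => hx)) ∘ₗ
      (Submodule.equivMapOfInjective T.domain.subtype (Submodule.injective_subtype _)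
        (S.domain.comap T.toFun)).symm.toLinearMap

/-- The minimum modulus `m(T) = inf {‖Tx‖ : x ∈ D(T), ‖x‖ = 1}`. -/
noncomputable def minMod (T : H₁ →ₗ.[ℂ] H₂) : ℝ :=
  sInf {r : ℝ | ∃ x : T.domain, ‖(x : H₁)‖ = 1 ∧ r = ‖T x‖}

/-- `T` is minimum attaining: some unit vector of the domain attains `m(T)`. -/
def MinAttains (T : H₁ →ₗ.[ℂ] H₂) : Prop :=
  ∃ x : T.domain, ‖(x : H₁)‖ = 1 ∧ ‖T x‖ = minMod T

namespace LinearPMap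

variable {E F : Type*} [NormedAddCommGroup E] [InnerProductSpace ℂ E]
  [NormedAddCommGroup F] [InnerProductSpace ℂ F]

theorem norm_inner_sub_mul_inner_sq_le (A : E →ₗ.[ℂ] F) {c : ℝ}
    (hc : ∀ z : A.domain, c * ‖(z : E)‖ ^ 2 ≤ ‖A z‖ ^ 2) (u v : A.domain) :
    ‖⟪A u, A v⟫_ℂ - c * ⟪(u : E), v⟫_ℂ‖ ^ 2
      ≤ (‖A u‖ ^ 2 - c * ‖(u : E)‖ ^ 2) * (‖A v‖ ^ 2 - c * ‖(v : E)‖ ^ 2) := by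
  let gram : PreInnerProductSpace.Core ℂ A.domain :=
    { inner u v := ⟪A u, A v⟫_ℂ - c * ⟪(u : E), v⟫_ℂ
      conj_inner_symm u v := by simp
      re_inner_nonneg z := by simpa [← Complex.ofReal_pow, ← Complex.ofReal_mul] using hc z
      add_left u v w := by simp only [A.map_add, Submodule.coe_add, inner_add_left]; ring
      smul_left u v r := by simp [A.map_smul]; ring }
  have h := @InnerProductSpace.Core.inner_mul_inner_self_le ℂ A.domain _ _ _ gram u v
  change ‖⟪A u, A v⟫_ℂ - c * ⟪(u : E), v⟫_ℂ‖ * ‖⟪A v, A u⟫_ℂ - c * ⟪(v : E), u⟫_ℂ‖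
    ≤ (⟪A u, A u⟫_ℂ - c * ⟪(u : E), u⟫_ℂ).re * (⟪A v, A v⟫_ℂ - c * ⟪(v : E), v⟫_ℂ).re at h
  have hswap : ⟪A v, A u⟫_ℂ - c * ⟪(v : E), u⟫_ℂ
      = starRingEnd ℂ (⟪A u, A v⟫_ℂ - c * ⟪(u : E), v⟫_ℂ) := by simp
  rw [hswap, Complex.norm_conj] at h
  simpa [sq, ← Complex.ofReal_pow, ← Complex.ofReal_mul, ← map_mul] using h

theorem inner_apply_eq_of_forall_mul_norm_le (A : E →ₗ.[ℂ] F) {x₀ : A.domain}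
    (hx₀ : ‖(x₀ : E)‖ = 1) (hmin : ∀ z : A.domain, ‖A x₀‖ * ‖(z : E)‖ ≤ ‖A z‖) (y : A.domain) :
    ⟪A x₀, A y⟫_ℂ = (‖A x₀‖ ^ 2 : ℝ) * ⟪(x₀ : E), y⟫_ℂ := by
  have hc (z : A.domain) : ‖A x₀‖ ^ 2 * ‖(z : E)‖ ^ 2 ≤ ‖A z‖ ^ 2 := by
    rw [← mul_pow]; gcongr; exact hmin z
  have h := A.norm_inner_sub_mul_inner_sq_le hc x₀ y
  rw [hx₀, one_pow, mul_one, sub_self, zero_mul] at h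
  exact sub_eq_zero.1 (by simpa using h)

end LinearPMap

section Composition

variable {E F G : Type*} [NormedAddCommGroup E] [InnerProductSpace ℂ E]
  [NormedAddCommGroup F] [InnerProductSpace ℂ F] [NormedAddCommGroup G] [InnerProductSpace ℂ G]
  {S : F →ₗ.[ℂ] G} {T : E →ₗ.[ℂ] F}

theorem mem_pmapComp_domain {x : E} :
    x ∈ (pmapComp S T).domain ↔ ∃ hx : x ∈ T.domain, T ⟨x, hx⟩ ∈ S.domain := by
  constructor
  · rintro ⟨y, hy, rfl⟩
    exact ⟨y.2, hy⟩
  · rintro ⟨hx, hTx⟩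
    exact ⟨⟨x, hx⟩, hTx, rfl⟩

theorem pmapComp_domain_le : (pmapComp S T).domain ≤ T.domain :=
  fun _ hx ↦ (mem_pmapComp_domain.1 hx).1

theorem apply_inclusion_mem_domain (x : (pmapComp S T).domain) :
    T (Submodule.inclusion pmapComp_domain_le x) ∈ S.domain :=
  (mem_pmapComp_domain.1 x.2).2

theorem pmapComp_apply (x : (pmapComp S T).domain) :
    pmapComp S T x =
      S ⟨T (Submodule.inclusion pmapComp_domain_le x), apply_inclusion_mem_domain x⟩ := by
  set e := Submodule.equivMapOfInjective T.domain.subtype (Submodule.injective_subtype _)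
    (S.domain.comap T.toFun)
  have he : e.symm x = ⟨Submodule.inclusion pmapComp_domain_le x, apply_inclusion_mem_domain x⟩ :=
    e.symm_apply_eq.2 rfl
  change S.toFun (T.toFun.restrict (q := S.domain) (fun _ hx ↦ hx) (e.symm x)) = _
  rw [he]
  rfl

end Composition

section MinimumModulus

variable {E F : Type*} [NormedAddCommGroup E] [InnerProductSpace ℂ E]
  [NormedAddCommGroup F] [InnerProductSpace ℂ F] (A : E →ₗ.[ℂ] F)

theorem minMod_nonneg : 0 ≤ minMod A :=
  Real.sInf_nonneg (by rintro r ⟨y, -, rfl⟩; positivity)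

theorem minMod_le {x : A.domain} (hx : ‖(x : E)‖ = 1) : minMod A ≤ ‖A x‖ :=
  csInf_le ⟨0, by rintro r ⟨y, -, rfl⟩; positivity⟩ ⟨x, hx, rfl⟩

theorem le_minMod {c : ℝ} (hne : ∃ x : A.domain, ‖(x : E)‖ = 1)
    (h : ∀ x : A.domain, ‖(x : E)‖ = 1 → c ≤ ‖A x‖) : c ≤ minMod A := by
  obtain ⟨x, hx⟩ := hne
  exact le_csInf ⟨‖A x‖, x, hx, rfl⟩ (by rintro r ⟨y, hy, rfl⟩; exact h y hy)

theorem le_sq_minMod {c : ℝ} (hne : ∃ x : A.domain, ‖(x : E)‖ = 1)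
    (h : ∀ x : A.domain, ‖(x : E)‖ = 1 → c ≤ ‖A x‖ ^ 2) : c ≤ minMod A ^ 2 :=
  (Real.sqrt_le_iff.1 (le_minMod A hne fun x hx ↦
    Real.sqrt_le_iff.2 ⟨norm_nonneg _, h x hx⟩)).2

theorem minMod_mul_norm_le (z : A.domain) : minMod A * ‖(z : E)‖ ≤ ‖A z‖ := by
  rcases eq_or_ne (z : E) 0 with hz | hz
  · simp [show z = 0 from Subtype.ext hz]
  have hpos : 0 < ‖(z : E)‖ := norm_pos_iff.2 hz
  have hunit : ‖(((‖(z : E)‖⁻¹ : ℂ) • z : A.domain) : E)‖ = 1 := by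
    simp [norm_smul, hpos.ne']
  have := minMod_le A hunit
  rw [A.map_smul, norm_smul, norm_inv, Complex.norm_real, norm_norm, le_inv_mul_iff₀ hpos]
    at this
  linarith

end MinimumModulus

section AdjointComp

open scoped LinearPMap

variable {E F : Type*} [NormedAddCommGroup E] [InnerProductSpace ℂ E] [CompleteSpace E]
  [NormedAddCommGroup F] [InnerProductSpace ℂ F] {T : E →ₗ.[ℂ] F}

theorem inner_adjoint_comp_apply (hdense : Dense (T.domain : Set E))
    (x : (pmapComp T† T).domain) (y : T.domain) :
    ⟪pmapComp T† T x, y⟫_ℂ = ⟪T (Submodule.inclusion pmapComp_domain_le x), T y⟫_ℂ := by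
  rw [pmapComp_apply]
  exact LinearPMap.adjoint_isFormalAdjoint hdense _ y

theorem norm_apply_sq_le_norm_adjoint_comp_apply (hdense : Dense (T.domain : Set E))
    (x : (pmapComp T† T).domain) :
    ‖T (Submodule.inclusion pmapComp_domain_le x)‖ ^ 2 ≤ ‖pmapComp T† T x‖ * ‖(x : E)‖ := by
  have h := norm_inner_le_norm (𝕜 := ℂ) (pmapComp T† T x) (x : E)
  rw [← Submodule.coe_inclusion pmapComp_domain_le x, inner_adjoint_comp_apply hdense,
    inner_self_eq_norm_sq_to_K] at h
  simpa using h

theorem sq_minMod_le_minMod_adjoint_comp (hdense : Dense (T.domain : Set E))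
    (hne : ∃ x : (pmapComp T† T).domain, ‖(x : E)‖ = 1) :
    minMod T ^ 2 ≤ minMod (pmapComp T† T) :=
  le_minMod _ hne fun x hx ↦ calc
    minMod T ^ 2 ≤ ‖T (Submodule.inclusion pmapComp_domain_le x)‖ ^ 2 := by
      gcongr
      · exact minMod_nonneg T
      · exact minMod_le T hx
    _ ≤ ‖pmapComp T† T x‖ := by
      simpa [hx] using norm_apply_sq_le_norm_adjoint_comp_apply hdense x

theorem exists_adjoint_comp_apply_eq_of_norm_apply_eq_minMod
    (hdense : Dense (T.domain : Set E)) {x₀ : T.domain} (hx₀ : ‖(x₀ : E)‖ = 1)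
    (hmin : ‖T x₀‖ = minMod T) :
    ∃ hx : (x₀ : E) ∈ (pmapComp T† T).domain,
      pmapComp T† T ⟨x₀, hx⟩ = ((minMod T ^ 2 : ℝ) : ℂ) • (x₀ : E) := by
  have hvar (y : T.domain) : ⟪((minMod T ^ 2 : ℝ) : ℂ) • (x₀ : E), y⟫_ℂ = ⟪T x₀, T y⟫_ℂ := by
    rw [inner_smul_left, Complex.conj_ofReal, ← hmin,
      T.inner_apply_eq_of_forall_mul_norm_le hx₀ (fun z ↦ hmin ▸ minMod_mul_norm_le T z)]
  have hTx₀ : T x₀ ∈ T†.domain := LinearPMap.mem_adjoint_domain_of_exists _ ⟨_, hvar⟩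
  have hx : (x₀ : E) ∈ (pmapComp T† T).domain := mem_pmapComp_domain.2 ⟨x₀.2, hTx₀⟩
  refine ⟨hx, ?_⟩
  rw [pmapComp_apply]
  exact LinearPMap.adjoint_apply_eq hdense _ hvar

theorem MinAttains.adjoint_comp (hdense : Dense (T.domain : Set E)) (h : MinAttains T) :
    MinAttains (pmapComp T† T) := by
  obtain ⟨x₀, hx₀, hmin⟩ := h
  obtain ⟨hx, hS⟩ := exists_adjoint_comp_apply_eq_of_norm_apply_eq_minMod hdense hx₀ hmin
  have hnorm : ‖pmapComp T† T ⟨x₀, hx⟩‖ = minMod T ^ 2 := by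
    rw [hS, norm_smul, hx₀, mul_one, Complex.norm_real, Real.norm_of_nonneg (sq_nonneg _)]
  refine ⟨⟨x₀, hx⟩, hx₀, le_antisymm ?_ (minMod_le _ hx₀)⟩
  rw [hnorm]
  exact sq_minMod_le_minMod_adjoint_comp hdense ⟨⟨x₀, hx⟩, hx₀⟩

theorem norm_pow_four_le_of_adjoint_comp_apply_add_eq (hdense : Dense (T.domain : Set E))
    {x : T.domain} {w : (pmapComp T† T).domain} (hw : pmapComp T† T w + w = x) :
    ‖(x : E)‖ ^ 4 ≤ ‖(x : E)‖ * ‖(w : E)‖ * (‖(x : E)‖ ^ 2 + ‖T x‖ ^ 2) := by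
  set w' := Submodule.inclusion pmapComp_domain_le w
  have hcross :
      ⟪T w', T x⟫_ℂ - ((-1 : ℝ) : ℂ) * ⟪(w' : E), x⟫_ℂ = ((‖(x : E)‖ ^ 2 : ℝ) : ℂ) := by
    rw [← inner_adjoint_comp_apply hdense, Submodule.coe_inclusion, Complex.ofReal_neg,
      Complex.ofReal_one, neg_one_mul, sub_neg_eq_add, ← inner_add_left, hw,
      inner_self_eq_norm_sq_to_K]
    norm_cast
  have hdiag : ‖T w'‖ ^ 2 + ‖(w' : E)‖ ^ 2 ≤ ‖(x : E)‖ * ‖(w' : E)‖ := by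
    calc ‖T w'‖ ^ 2 + ‖(w' : E)‖ ^ 2 = (⟪pmapComp T† T w + w, (w' : E)⟫_ℂ).re := by
          rw [inner_add_left, inner_adjoint_comp_apply hdense, Complex.add_re,
            ← inner_self_eq_norm_sq (𝕜 := ℂ), ← inner_self_eq_norm_sq (𝕜 := ℂ)]
          rfl
      _ ≤ ‖(x : E)‖ * ‖(w' : E)‖ := hw ▸ re_inner_le_norm (𝕜 := ℂ) _ _
  have hCS := T.norm_inner_sub_mul_inner_sq_le (c := -1)
    (fun z ↦ by linarith [sq_nonneg ‖T z‖, sq_nonneg ‖(z : E)‖]) w' x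
  rw [hcross, Complex.norm_real, Real.norm_of_nonneg (by positivity)] at hCS
  calc ‖(x : E)‖ ^ 4 = (‖(x : E)‖ ^ 2) ^ 2 := by ring
    _ ≤ (‖T w'‖ ^ 2 + ‖(w' : E)‖ ^ 2) * (‖(x : E)‖ ^ 2 + ‖T x‖ ^ 2) := by linarith
    _ ≤ ‖(x : E)‖ * ‖(w' : E)‖ * (‖(x : E)‖ ^ 2 + ‖T x‖ ^ 2) := by gcongr

end AdjointComp

section Closed

open scoped LinearPMap

variable {E F : Type*} [NormedAddCommGroup E] [InnerProductSpace ℂ E] [CompleteSpace E]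
  [NormedAddCommGroup F] [InnerProductSpace ℂ F] [CompleteSpace F] {T : E →ₗ.[ℂ] F}

theorem exists_adjoint_comp_apply_add_eq (hdense : Dense (T.domain : Set E))
    (hclosed : T.IsClosed) (u : E) : ∃ w : (pmapComp T† T).domain, pmapComp T† T w + w = u := by
  let G : Submodule ℂ (WithLp 2 (E × F)) :=
    T.graph.comap (WithLp.linearEquiv 2 ℂ (E × F)).toLinearMap
  have : CompleteSpace G :=
    (hclosed.preimage (WithLp.prod_continuous_ofLp 2 E F)).completeSpace_coe
  obtain ⟨a, ha, b, hb, hab⟩ := G.exists_add_mem_mem_orthogonal (WithLp.toLp 2 (u, 0))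
  obtain ⟨w, hwa, hTw⟩ := T.mem_graph_iff.1 ha
  -- `b ⟂ graph T` says exactly that `(b.snd, -b.fst)` lies in the graph of `T*`
  have hgraph : (b.snd, -b.fst) ∈ T†.graph := by
    rw [T.adjoint_graph_eq_graph_adjoint hdense, Submodule.mem_adjoint_iff]
    intro p q hpq
    have h := (Submodule.mem_orthogonal G b).1 hb (WithLp.toLp 2 (p, q)) hpq
    rw [WithLp.prod_inner_apply] at h
    change ⟪p, b.fst⟫_ℂ + ⟪q, b.snd⟫_ℂ = 0 at h
    rw [inner_neg_right, sub_neg_eq_add, add_comm, h]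
  obtain ⟨v, hvb, hadj⟩ := T†.mem_graph_iff.1 hgraph
  have hu : u = a.fst + b.fst := congrArg WithLp.fst hab
  have h0 : 0 = a.snd + b.snd := congrArg WithLp.snd hab
  have hTw' : (T w : F) = -(v : F) := by
    rw [hTw, hvb]
    exact eq_neg_of_add_eq_zero_left h0.symm
  have hmem : (T w : F) ∈ T†.domain := hTw' ▸ T†.domain.neg_mem v.2
  let x : (pmapComp T† T).domain := ⟨w, mem_pmapComp_domain.2 ⟨w.2, hmem⟩⟩
  have hv : (⟨T (Submodule.inclusion pmapComp_domain_le x), apply_inclusion_mem_domain x⟩ :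
      T†.domain) = -v := Subtype.ext hTw'
  refine ⟨x, ?_⟩
  rw [pmapComp_apply, hv, T†.map_neg, hadj]
  change -(-b.fst) + (w : E) = u
  rw [neg_neg, hu, hwa, add_comm]
  rfl

theorem mul_norm_sq_le_of_forall_mul_norm_le_adjoint_comp_add
    (hdense : Dense (T.domain : Set E)) (hclosed : T.IsClosed) {K : ℝ}
    (hK : ∀ w : (pmapComp T† T).domain, K * ‖(w : E)‖ ≤ ‖pmapComp T† T w + w‖) (x : T.domain) :
    K * ‖(x : E)‖ ^ 2 ≤ ‖(x : E)‖ ^ 2 + ‖T x‖ ^ 2 := by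
  obtain ⟨w, hw⟩ := exists_adjoint_comp_apply_add_eq hdense hclosed x
  have hquartic := norm_pow_four_le_of_adjoint_comp_apply_add_eq hdense hw
  have hKw : K * ‖(w : E)‖ ≤ ‖(x : E)‖ := hw ▸ hK w
  rcases eq_or_ne ‖(x : E)‖ 0 with hx | hx
  · simp [hx]
  have hx2 : 0 < ‖(x : E)‖ ^ 2 := by positivity
  rcases le_or_gt K 0 with hK0 | hK0
  · nlinarith [sq_nonneg ‖T x‖]
  refine le_of_mul_le_mul_left ?_ hx2
  calc ‖(x : E)‖ ^ 2 * (K * ‖(x : E)‖ ^ 2) = K * ‖(x : E)‖ ^ 4 := by ring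
    _ ≤ K * (‖(x : E)‖ * ‖(w : E)‖ * (‖(x : E)‖ ^ 2 + ‖T x‖ ^ 2)) := by gcongr
    _ = ‖(x : E)‖ * (K * ‖(w : E)‖) * (‖(x : E)‖ ^ 2 + ‖T x‖ ^ 2) := by ring
    _ ≤ ‖(x : E)‖ * ‖(x : E)‖ * (‖(x : E)‖ ^ 2 + ‖T x‖ ^ 2) := by gcongr
    _ = _ := by ring

theorem minMod_adjoint_comp_le_sq (hdense : Dense (T.domain : Set E)) (hclosed : T.IsClosed)
    (hne : ∃ x : T.domain, ‖(x : E)‖ = 1) : minMod (pmapComp T† T) ≤ minMod T ^ 2 := by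
  set μ := minMod (pmapComp T† T)
  set m := minMod T
  have hμ : 0 ≤ μ := minMod_nonneg _
  set K := √(μ ^ 2 + 2 * m ^ 2 + 1)
  have hK (w : (pmapComp T† T).domain) : K * ‖(w : E)‖ ≤ ‖pmapComp T† T w + w‖ := by
    set w' := Submodule.inclusion pmapComp_domain_le w
    have hSw : μ * ‖(w : E)‖ ≤ ‖pmapComp T† T w‖ := minMod_mul_norm_le _ w
    have hTw : m * ‖(w' : E)‖ ≤ ‖T w'‖ := minMod_mul_norm_le T w'
    have hform : RCLike.re ⟪pmapComp T† T w, (w : E)⟫_ℂ = ‖T w'‖ ^ 2 := by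
      rw [← Submodule.coe_inclusion pmapComp_domain_le w, inner_adjoint_comp_apply hdense,
        ← inner_self_eq_norm_sq (𝕜 := ℂ)]
    refine le_of_pow_le_pow_left₀ two_ne_zero (norm_nonneg _) ?_
    rw [@norm_add_sq ℂ, hform, mul_pow, Real.sq_sqrt (by positivity)]
    have hm : 0 ≤ m := minMod_nonneg T
    have hSw2 := pow_le_pow_left₀ (by positivity) hSw 2
    have hTw2 := pow_le_pow_left₀ (by positivity) hTw 2
    change (m * ‖(w : E)‖) ^ 2 ≤ ‖T w'‖ ^ 2 at hTw2
    rw [mul_pow] at hSw2 hTw2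
    linarith
  have hKm : K - 1 ≤ m ^ 2 := le_sq_minMod T hne fun x hx ↦ by
    have := mul_norm_sq_le_of_forall_mul_norm_le_adjoint_comp_add hdense hclosed hK x
    rw [hx] at this
    linarith
  have hK2 : K ^ 2 = μ ^ 2 + 2 * m ^ 2 + 1 := Real.sq_sqrt (by positivity)
  have hsq : μ ^ 2 ≤ (m ^ 2) ^ 2 := by nlinarith [Real.sqrt_nonneg (μ ^ 2 + 2 * m ^ 2 + 1)]
  exact (pow_le_pow_iff_left₀ hμ (sq_nonneg m) two_ne_zero).1 hsq

theorem MinAttains.of_adjoint_comp (hdense : Dense (T.domain : Set E)) (hclosed : T.IsClosed)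
    (h : MinAttains (pmapComp T† T)) : MinAttains T := by
  obtain ⟨x₀, hx₀, hmin⟩ := h
  set x := Submodule.inclusion pmapComp_domain_le x₀
  refine ⟨x, hx₀, le_antisymm ?_ (minMod_le T hx₀)⟩
  have hle := norm_apply_sq_le_norm_adjoint_comp_apply hdense x₀
  rw [hx₀, mul_one, hmin] at hle
  exact (pow_le_pow_iff_left₀ (norm_nonneg _) (minMod_nonneg T) two_ne_zero).1
    (hle.trans (minMod_adjoint_comp_le_sq hdense hclosed ⟨x, hx₀⟩))

end Closed

/-- A densely defined closed operator `T` is minimum attaining iff `T*T` (with its natural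
domain `{x ∈ D(T) : Tx ∈ D(T*)}`) is minimum attaining. -/
theorem minAttains_iff_adjoint_comp_minAttains (T : H₁ →ₗ.[ℂ] H₂)
    (hdense : Dense (T.domain : Set H₁)) (hclosed : T.IsClosed) :
    MinAttains T ↔ MinAttains (pmapComp T.adjoint T) :=
  ⟨MinAttains.adjoint_comp hdense, MinAttains.of_adjoint_comp hdense hclosed⟩
end

section
/- Let T be a densely defined closed operator from H1 to H2 that is minimum attaining and one-to-one. Then the range R(T) of T is closed in H2. -/
variable {H₁ H₂ : Type*} [NormedAddCommGroup H₁] [InnerProductSpace ℂ H₁] [CompleteSpace H₁]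
  [NormedAddCommGroup H₂] [InnerProductSpace ℂ H₂] [CompleteSpace H₂]

/-- A densely defined closed minimum attaining one-to-one operator has closed range. -/
theorem isClosed_range_of_minAttains_of_injective (T : H₁ →ₗ.[ℂ] H₂)
    (hdense : Dense (T.domain : Set H₁)) (hclosed : T.IsClosed)
    (hmin : MinAttains T) (hinj : Function.Injective fun x : T.domain => T x) :
    IsClosed (Set.range fun x : T.domain => T x) := by
  obtain ⟨x₀, hx₀, hval⟩ := hmin
  set m := minMod T with hm
  have hm0 : 0 < m := by
    rw [← hval]
    rcases (norm_nonneg (T x₀)).lt_or_eq with h | h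
    · exact h
    · exfalso
      have h1 : T x₀ = 0 := norm_eq_zero.mp h.symm
      have h2 : x₀ = 0 := hinj (by simpa using h1)
      rw [h2] at hx₀
      simp at hx₀
  have hbdd : BddBelow {r : ℝ | ∃ x : T.domain, ‖(x : H₁)‖ = 1 ∧ r = ‖T x‖} := by
    refine ⟨0, ?_⟩
    rintro r ⟨x, _, rfl⟩
    exact norm_nonneg _
  have hlow : ∀ x : T.domain, m * ‖(x : H₁)‖ ≤ ‖T x‖ := by
    intro x
    rcases eq_or_ne (x : H₁) 0 with h | h
    · have hx0 : x = 0 := Subtype.ext h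
      simp [hx0]
    · have hn : (0:ℝ) < ‖(x : H₁)‖ := norm_pos_iff.mpr h
      set u : T.domain := ((‖(x : H₁)‖⁻¹ : ℝ) : ℂ) • x with hu_def
      have hucoe : (u : H₁) = ((‖(x : H₁)‖⁻¹ : ℝ) : ℂ) • (x : H₁) := rfl
      have hu : ‖(u : H₁)‖ = 1 := by
        rw [hucoe, norm_smul]
        simp [abs_of_pos (inv_pos.mpr hn), inv_mul_cancel₀ hn.ne']
      have hmem : ‖T u‖ ∈ {r : ℝ | ∃ x : T.domain, ‖(x : H₁)‖ = 1 ∧ r = ‖T x‖} :=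
        ⟨u, hu, rfl⟩
      have hle : m ≤ ‖T u‖ := csInf_le hbdd hmem
      have hTu : ‖T u‖ = ‖(x : H₁)‖⁻¹ * ‖T x‖ := by
        rw [hu_def, T.map_smul, norm_smul]
        simp [abs_of_pos (inv_pos.mpr hn)]
      rw [hTu] at hle
      calc m * ‖(x : H₁)‖ ≤ (‖(x : H₁)‖⁻¹ * ‖T x‖) * ‖(x : H₁)‖ := by
            exact mul_le_mul_of_nonneg_right hle hn.le
        _ = ‖T x‖ := by field_simp
  apply IsSeqClosed.isClosed
  intro f y hf hfy
  choose g hg using hf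
  have hg' : ∀ n, T (g n) = f n := hg
  have hfC : CauchySeq f := hfy.cauchySeq
  have hgC : CauchySeq (fun n => (g n : H₁)) := by
    rw [Metric.cauchySeq_iff] at hfC ⊢
    intro ε hε
    obtain ⟨N, hN⟩ := hfC (m * ε) (by positivity)
    refine ⟨N, fun a ha b hb => ?_⟩
    have hdiff : ‖T (g a - g b)‖ = ‖f a - f b‖ := by
      rw [T.map_sub, hg' a, hg' b]
    have h1 : m * ‖(g a : H₁) - (g b : H₁)‖ ≤ ‖f a - f b‖ := by
      have := hlow (g a - g b)
      rwa [hdiff] at this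
    have h2 : dist (f a) (f b) < m * ε := hN a ha b hb
    rw [dist_eq_norm] at h2 ⊢
    push_cast
    nlinarith [norm_nonneg ((g a : H₁) - (g b : H₁))]
  obtain ⟨x, hx⟩ := cauchySeq_tendsto_of_complete hgC
  have hgraph : (x, y) ∈ T.graph := by
    have hmem : ∀ n, ((g n : H₁), f n) ∈ (T.graph : Set (H₁ × H₂)) := by
      intro n
      have := T.mem_graph (g n)
      rwa [hg' n] at this
    have htend : Filter.Tendsto (fun n => ((g n : H₁), f n)) Filter.atTop
        (nhds (x, y)) := hx.prodMk_nhds hfy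
    exact hclosed.mem_of_tendsto htend (Filter.Eventually.of_forall hmem)
  rw [T.mem_graph_iff] at hgraph
  obtain ⟨z, hz1, hz2⟩ := hgraph
  exact ⟨z, by simpa using hz2⟩
end

section
/- Let T be a densely defined closed operator from H1 to H2 that is one-to-one. Then T is minimum attaining if and only if the range R(T) is closed in H2 and the (then bounded) inverse operator T⁻¹ : R(T) → H1 attains its norm, i.e. there exists y₀ ∈ R(T) with ‖y₀‖ = 1 and ‖T⁻¹y₀‖ = ‖T⁻¹‖. -/
variable {H₁ H₂ : Type*} [NormedAddCommGroup H₁] [InnerProductSpace ℂ H₁] [CompleteSpace H₁]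
  [NormedAddCommGroup H₂] [InnerProductSpace ℂ H₂] [CompleteSpace H₂]

/-!
Rescaling `x ↦ x / ‖T x‖` is a bijection between the unit vectors of `D(T)` and the vectors
with `‖T x‖ = 1`, turning `‖T x‖` into `1 / ‖x‖`. Hence `inf {‖T x‖ : ‖x‖ = 1}` is a minimum
`m > 0` exactly when `sup {‖x‖ : ‖T x‖ = 1}` is a maximum, namely `m⁻¹`. A positive minimum
gives `m ‖x‖ ≤ ‖T x‖`, so `T x_n → y` forces `x_n` to be Cauchy, and closedness of the graph
puts `y` in the range.
-/

open Filter Set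

namespace LinearPMap

section Normed

variable {𝕜 E F : Type*} [RCLike 𝕜] [NormedAddCommGroup E] [NormedSpace 𝕜 E]
  [NormedAddCommGroup F] [NormedSpace 𝕜 F]

def minModSet (T : E →ₗ.[𝕜] F) : Set ℝ :=
  {r | ∃ x : T.domain, ‖(x : E)‖ = 1 ∧ r = ‖T x‖}

/-- The norm of `T⁻¹ : R(T) → E` is the supremum of this set. -/
def inverseNormSet (T : E →ₗ.[𝕜] F) : Set ℝ :=
  {r | ∃ x : T.domain, ‖T x‖ = 1 ∧ r = ‖(x : E)‖}

variable (T : E →ₗ.[𝕜] F)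

theorem exists_norm_eq_div (x : T.domain) {r : ℝ} (hr : 0 < r) :
    ∃ y : T.domain, ‖(y : E)‖ = ‖(x : E)‖ / r ∧ ‖T y‖ = ‖T x‖ / r :=
  ⟨((r⁻¹ : ℝ) : 𝕜) • x, by simp [norm_smul, abs_of_pos hr, div_eq_inv_mul],
    by simp [T.map_smul, norm_smul, abs_of_pos hr, div_eq_inv_mul]⟩

theorem pos_of_mem_inverseNormSet {r : ℝ} (hr : r ∈ T.inverseNormSet) : 0 < r := by
  obtain ⟨x, hTx, rfl⟩ := hr
  refine norm_pos_iff.2 fun hx => ?_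
  rw [show x = 0 from Subtype.ext hx, T.map_zero, norm_zero] at hTx
  exact zero_ne_one hTx

theorem pos_of_mem_minModSet (hinj : Function.Injective fun x : T.domain => T x) {r : ℝ}
    (hr : r ∈ T.minModSet) : 0 < r := by
  obtain ⟨x, hx, rfl⟩ := hr
  have hx0 : x ≠ 0 := fun h => by simp [h] at hx
  exact norm_pos_iff.2 fun hTx => hx0 (hinj (hTx.trans T.map_zero.symm))

theorem mul_norm_le_of_mem_lowerBounds {m : ℝ} (hm : m ∈ lowerBounds T.minModSet)
    (x : T.domain) : m * ‖(x : E)‖ ≤ ‖T x‖ := by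
  rcases eq_or_ne (x : E) 0 with hx | hx
  · simp [hx]
  have hxpos := norm_pos_iff.2 hx
  obtain ⟨y, hy, hTy⟩ := T.exists_norm_eq_div x hxpos
  have : m ≤ ‖T x‖ / ‖(x : E)‖ := hm ⟨y, by rw [hy, div_self hxpos.ne'], hTy.symm⟩
  exact (le_div_iff₀ hxpos).1 this

theorem isGreatest_inverseNormSet_of_isLeast {m : ℝ} (hm : IsLeast T.minModSet m)
    (hm0 : 0 < m) : IsGreatest T.inverseNormSet m⁻¹ := by
  refine ⟨?_, ?_⟩
  · obtain ⟨x, hx, rfl⟩ := hm.1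
    obtain ⟨y, hy, hTy⟩ := T.exists_norm_eq_div x hm0
    exact ⟨y, by rw [hTy, div_self hm0.ne'], by rw [hy, hx, one_div]⟩
  · rintro r ⟨x, hTx, rfl⟩
    have := T.mul_norm_le_of_mem_lowerBounds hm.2 x
    rw [hTx] at this
    rwa [← one_div, le_div_iff₀ hm0, mul_comm]

theorem isLeast_minModSet_of_isGreatest (hinj : Function.Injective fun x : T.domain => T x)
    {M : ℝ} (hM : IsGreatest T.inverseNormSet M) : IsLeast T.minModSet M⁻¹ := by
  have hM0 := T.pos_of_mem_inverseNormSet hM.1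
  refine ⟨?_, ?_⟩
  · obtain ⟨x, hTx, rfl⟩ := hM.1
    obtain ⟨y, hy, hTy⟩ := T.exists_norm_eq_div x hM0
    exact ⟨y, by rw [hy, div_self hM0.ne'], by rw [hTy, hTx, one_div]⟩
  · rintro r ⟨x, hx, rfl⟩
    have hTx0 := T.pos_of_mem_minModSet hinj ⟨x, hx, rfl⟩
    obtain ⟨y, hy, hTy⟩ := T.exists_norm_eq_div x hTx0
    have : 1 / ‖T x‖ ≤ M := hM.2 ⟨y, by rw [hTy, div_self hTx0.ne'], by rw [hy, hx]⟩
    rwa [one_div, inv_le_comm₀ hTx0 hM0] at this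

theorem exists_norm_eq_sSup_inverseNormSet_iff :
    (∃ x₀ : T.domain, ‖T x₀‖ = 1 ∧ ‖(x₀ : E)‖ = sSup T.inverseNormSet) ↔
      ∃ M, IsGreatest T.inverseNormSet M := by
  constructor
  · rintro ⟨x₀, hTx₀, hsup⟩
    have hmem : ‖(x₀ : E)‖ ∈ T.inverseNormSet := ⟨x₀, hTx₀, rfl⟩
    -- `sSup` of a set unbounded above is `0`, which `‖x₀‖ > 0` excludes.
    have hbdd : BddAbove T.inverseNormSet := by
      by_contra h
      rw [Real.sSup_of_not_bddAbove h] at hsup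
      exact (T.pos_of_mem_inverseNormSet hmem).ne' hsup
    exact ⟨_, hmem, fun r hr => hsup ▸ le_csSup hbdd hr⟩
  · rintro ⟨M, hM⟩
    obtain ⟨x₀, hTx₀, rfl⟩ := hM.1
    exact ⟨x₀, hTx₀, hM.csSup_eq.symm⟩

theorem isClosed_range_of_mul_norm_le [CompleteSpace E] (hT : T.IsClosed) {c : ℝ} (hc : 0 < c)
    (hbound : ∀ x : T.domain, c * ‖(x : E)‖ ≤ ‖T x‖) :
    _root_.IsClosed (range fun x : T.domain => T x) := by
  have hanti : AntilipschitzWith (Real.toNNReal c⁻¹) T.toFun :=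
    AddMonoidHomClass.antilipschitz_of_bound T.toFun fun x => by
      rw [Real.coe_toNNReal _ (inv_nonneg.2 hc.le), inv_mul_eq_div, le_div_iff₀ hc, mul_comm]
      exact hbound x
  refine IsSeqClosed.isClosed fun ys y hys hy => ?_
  choose xs hxs using hys
  have hys_eq : T.toFun ∘ xs = ys := funext hxs
  have hTcauchy := cauchySeq_iff_tendsto.1 hy.cauchySeq
  rw [← hys_eq, ← Prod.map_comp_map] at hTcauchy
  have hcauchy : CauchySeq xs :=
    cauchySeq_iff_tendsto.2 ((tendsto_comap_iff.2 hTcauchy).mono_right hanti.comap_uniformity_le)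
  obtain ⟨x, hx⟩ := cauchySeq_tendsto_of_complete
    (uniformContinuous_subtype_val.comp_cauchySeq hcauchy)
  have hgraph : (x, y) ∈ T.graph :=
    hT.mem_of_tendsto (hx.prodMk_nhds hy) <| Eventually.of_forall fun n =>
      (T.mem_graph_iff).2 ⟨xs n, rfl, hxs n⟩
  obtain ⟨x', -, hx'⟩ := (T.mem_graph_iff).1 hgraph
  exact ⟨x', hx'⟩

end Normed

section InnerProduct

variable {E F : Type*} [NormedAddCommGroup E] [InnerProductSpace ℂ E]
  [NormedAddCommGroup F] [InnerProductSpace ℂ F]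

theorem minAttains_iff_exists_isLeast (T : E →ₗ.[ℂ] F) :
    MinAttains T ↔ ∃ m, IsLeast T.minModSet m := by
  constructor
  · rintro ⟨x, hx, hTx⟩
    refine ⟨minMod T, ⟨x, hx, hTx.symm⟩, fun r hr => csInf_le ⟨0, ?_⟩ hr⟩
    rintro _ ⟨y, -, rfl⟩
    exact norm_nonneg _
  · rintro ⟨m, hm⟩
    obtain ⟨x, hx, rfl⟩ := hm.1
    exact ⟨x, hx, hm.csInf_eq.symm⟩

end InnerProduct

end LinearPMap

theorem minAttains_iff_closedRange_and_inverse_normAttains_general (T : H₁ →ₗ.[ℂ] H₂)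
    (hclosed : T.IsClosed)
    (hinj : Function.Injective fun x : T.domain => T x) :
    MinAttains T ↔
      (IsClosed (Set.range fun x : T.domain => T x) ∧
        ∃ x₀ : T.domain, ‖T x₀‖ = 1 ∧
          ‖(x₀ : H₁)‖ = sSup {r : ℝ | ∃ x : T.domain, ‖T x‖ = 1 ∧ r = ‖(x : H₁)‖}) := by
  change _ ↔ _ ∧ ∃ x₀ : T.domain, ‖T x₀‖ = 1 ∧ ‖(x₀ : H₁)‖ = sSup T.inverseNormSet
  rw [LinearPMap.minAttains_iff_exists_isLeast, T.exists_norm_eq_sSup_inverseNormSet_iff]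
  constructor
  · rintro ⟨m, hm⟩
    have hm0 := T.pos_of_mem_minModSet hinj hm.1
    exact ⟨T.isClosed_range_of_mul_norm_le hclosed hm0 (T.mul_norm_le_of_mem_lowerBounds hm.2),
      _, T.isGreatest_inverseNormSet_of_isLeast hm hm0⟩
  · rintro ⟨-, M, hM⟩
    exact ⟨_, T.isLeast_minModSet_of_isGreatest hinj hM⟩

/-- For a densely defined closed one-to-one operator `T`, `T` is minimum attaining iff
`R(T)` is closed and the inverse `T⁻¹ : R(T) → H₁` attains its norm: there is a unit vector
`y₀ = T x₀ ∈ R(T)` with `‖T⁻¹ y₀‖ = ‖x₀‖ = ‖T⁻¹‖ = sup {‖x‖ : x ∈ D(T), ‖T x‖ = 1}`. -/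
theorem minAttains_iff_closedRange_and_inverse_normAttains (T : H₁ →ₗ.[ℂ] H₂)
    (hdense : Dense (T.domain : Set H₁)) (hclosed : T.IsClosed)
    (hinj : Function.Injective fun x : T.domain => T x) :
    MinAttains T ↔
      (IsClosed (Set.range fun x : T.domain => T x) ∧
        ∃ x₀ : T.domain, ‖T x₀‖ = 1 ∧
          ‖(x₀ : H₁)‖ = sSup {r : ℝ | ∃ x : T.domain, ‖T x‖ = 1 ∧ r = ‖(x : H₁)‖}) :=
  minAttains_iff_closedRange_and_inverse_normAttains_general T hclosed hinj
end
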